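/- arXiv:2104.06974 — 6 statements merged into one kernel-verified Lean document; each statement's English description precedes it below -/
import Mathlib

section
/- Let b, c, m be nonnegative integers with m ≤ b − c. Then Σ_{l=0}^{c} (−1)^{c−l} · C(b−m−c+1, b−m−c−l) · C(b−m−l, c−l) = (−1)^c · C(b−m+1, b−m−c) (as an identity of integers). -/
/-!
Put `a = b - m - c`. By symmetry `C(a+1, a-l) = C(a+1, l+1)`, and upper negation gives
`C(a+c-l, c-l) = (-1)^(c-l) C(-(a+1), c-l)`, so the sum is
`∑_{l ≤ c} C(a+1, l+1) C(-(a+1), c-l)`. This is the Chu–Vandermonde sum for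
`C((a+1) + (-(a+1)), c+1) = C(0, c+1) = 0` without its `i = 0` term, hence equals
`-C(-(a+1), c+1) = (-1)^c C(a+c+1, c+1)`.
-/

/-- Binomial coefficient of integers with the convention `iC n k = 0` when `k < 0` or `k > n`. -/
def iC (n k : ℤ) : ℤ := if 0 ≤ k ∧ k ≤ n then (n.toNat.choose k.toNat : ℤ) else 0

open Finset

theorem iC_natCast (n k : ℕ) : iC n k = n.choose k := by
  unfold iC
  split_ifs with h
  · simp
  · rw [Nat.choose_eq_zero_of_lt (by omega), Nat.cast_zero]

theorem iC_natCast_sub_natCast (n k : ℕ) : iC n (n - k) = n.choose k := by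
  rcases le_or_gt k n with hk | hk
  · rw [← Nat.cast_sub hk, iC_natCast, Nat.choose_symm hk]
  · rw [Nat.choose_eq_zero_of_lt hk, Nat.cast_zero, iC, if_neg (by omega)]

namespace Ring

variable {R : Type*} [CommRing R] [BinomialRing R]

theorem choose_neg_natCast_add_one (a n : ℕ) :
    choose (-(a + 1 : R)) n = (-1) ^ n * (a + n).choose n := by
  rw [choose_neg, Units.smul_def, zsmul_eq_mul, Int.cast_negOnePow_natCast,
    show (a + 1 + n - 1 : R) = (a + n : ℕ) by push_cast; ring, choose_natCast]

theorem sum_antidiagonal_choose_mul_choose_neg (r : R) (k : ℕ) :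
    ∑ ij ∈ antidiagonal (k + 1), choose r ij.1 * choose (-r) ij.2 = 0 := by
  rw [← add_choose_eq _ (Commute.all _ _), add_neg_cancel, choose_zero_succ]

end Ring

theorem sum_negOnePow_mul_choose_succ_mul_choose_add (a c : ℕ) :
    ∑ l ∈ range (c + 1),
      (-1 : ℤ) ^ (c - l) * (a + 1).choose (l + 1) * (a + (c - l)).choose (c - l) =
      (-1) ^ c * (a + (c + 1)).choose (c + 1) := by
  have hvdm := Ring.sum_antidiagonal_choose_mul_choose_neg ((a + 1 : ℕ) : ℤ) c
  rw [Nat.sum_antidiagonal_eq_sum_range_succ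
    (fun i j => Ring.choose ((a + 1 : ℕ) : ℤ) i * Ring.choose (-((a + 1 : ℕ) : ℤ)) j),
    sum_range_succ'] at hvdm
  simp only [Ring.choose_natCast] at hvdm
  simp only [Nat.cast_add, Nat.cast_one, Ring.choose_neg_natCast_add_one, Nat.add_sub_add_right,
    Nat.sub_zero, Nat.choose_zero_right] at hvdm
  calc _ = ∑ l ∈ range (c + 1),
        ((a + 1).choose (l + 1) : ℤ) * ((-1) ^ (c - l) * (a + (c - l)).choose (c - l)) :=
        sum_congr rfl fun l _ => by ring
    _ = _ := by linear_combination hvdm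

/-- **Lemma 3.1 (second part).** For nonnegative integers `b, c, m` with `m ≤ b - c`
(encoded as `m + c ≤ b`), we have
`Σ_{l=0}^{c} (−1)^{c−l} C(b−m−c+1, b−m−c−l) C(b−m−l, c−l) = (−1)^c C(b−m+1, b−m−c)`. -/
theorem stmt_1 (b c m : ℕ) (hmc : m + c ≤ b) :
    ∑ l ∈ Finset.range (c + 1),
      (-1 : ℤ) ^ (c - l) * iC ((b : ℤ) - m - c + 1) ((b : ℤ) - m - c - l) *
        iC ((b : ℤ) - m - l) ((c : ℤ) - l)
      = (-1 : ℤ) ^ c * iC ((b : ℤ) - m + 1) ((b : ℤ) - m - c) := by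
  obtain ⟨a, rfl⟩ := Nat.exists_eq_add_of_le hmc
  have hrhs : iC ((m + c + a : ℕ) - m + 1 : ℤ) ((m + c + a : ℕ) - m - c) =
      (a + (c + 1)).choose (c + 1) := by
    rw [show ((m + c + a : ℕ) - m + 1 : ℤ) = (a + (c + 1) : ℕ) by push_cast; ring,
      show ((m + c + a : ℕ) - m - c : ℤ) = a by push_cast; ring, iC_natCast, Nat.choose_symm_add]
  rw [hrhs, ← sum_negOnePow_mul_choose_succ_mul_choose_add]
  refine sum_congr rfl fun l hl => ?_
  have hlc : l ≤ c := Nat.lt_succ_iff.mp (mem_range.mp hl)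
  rw [show ((m + c + a : ℕ) - m - c + 1 : ℤ) = (a + 1 : ℕ) by push_cast; ring,
    show ((m + c + a : ℕ) - m - c - l : ℤ) = (a + 1 : ℕ) - (l + 1 : ℕ) by push_cast; ring,
    show ((m + c + a : ℕ) - m - l : ℤ) = (a + (c - l) : ℕ) by push_cast [hlc]; ring,
    ← Nat.cast_sub hlc, iC_natCast_sub_natCast, iC_natCast]
end

section
/- Let p be an odd prime, t ≥ 1 an integer, and N, M positive integers such that p^t(p−1) divides N − M. Then for every integer a, p^{t+1} divides Σ_{0 ≤ j ≤ N, j ≡ a (mod p−1)} C(N, j) − Σ_{0 ≤ j ≤ M, j ≡ a (mod p−1)} C(M, j). -/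
/-!
Let `ζ` be a unit of order `p - 1` in `R = ℤ/p^{t+1}`. Since `ζ^m - 1` is a unit unless
`ζ^m = 1`, the character sums `∑_{i < p-1} ζ^{im}` vanish unless `p - 1 ∣ m`, so
`(p - 1) ∑_{j ≡ a} C(n, j) = ∑_{i < p-1} ζ^{-ai} (1 + ζ^i)^n` in `R`. Each `1 + ζ^i` is either
a unit, whose order divides `φ(p^{t+1}) = p^t(p - 1)`, or zero (when `ζ^i = -1`, using that `p`
is odd); in both cases `(1 + ζ^i)^N = (1 + ζ^i)^M`.
-/

open Finset

theorem geom_sum_eq_zero_of_pow_eq_one {R : Type*} [CommRing R] {x : R} {d : ℕ}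
    (hx : x ^ d = 1) (hx1 : IsUnit (x - 1)) : ∑ i ∈ range d, x ^ i = 0 := by
  have h := geom_sum_mul x d
  rwa [hx, sub_self, hx1.mul_left_eq_zero] at h

namespace IsPrimitiveRoot

variable {R : Type*} [CommRing R] {d : ℕ} {ζ : Rˣ}

theorem geom_sum_zpow_eq (hζ : IsPrimitiveRoot ζ d)
    (hsub : ∀ x : R, x ^ d = 1 → x ≠ 1 → IsUnit (x - 1)) (m : ℤ) :
    ∑ i ∈ range d, ((ζ ^ m : Rˣ) : R) ^ i = if (d : ℤ) ∣ m then (d : R) else 0 := by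
  split_ifs with hdm
  · simp [(hζ.zpow_eq_one_iff_dvd m).mpr hdm]
  · have hw : ((ζ ^ m : Rˣ) : R) ^ d = 1 := by
      rw [← Units.val_pow_eq_pow_val, ← zpow_natCast, ← zpow_mul, mul_comm, zpow_mul,
        zpow_natCast, hζ.pow_eq_one, one_zpow, Units.val_one]
    have hw1 : ((ζ ^ m : Rˣ) : R) ≠ 1 := by
      rw [Ne, Units.val_eq_one, hζ.zpow_eq_one_iff_dvd]
      exact hdm
    exact geom_sum_eq_zero_of_pow_eq_one hw (hsub _ hw hw1)

theorem sum_zpow_mul_one_add_pow (hζ : IsPrimitiveRoot ζ d)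
    (hsub : ∀ x : R, x ^ d = 1 → x ≠ 1 → IsUnit (x - 1)) (a : ℤ) (n : ℕ) :
    ∑ i ∈ range d, ((ζ ^ (-a) : Rˣ) : R) ^ i * (1 + (ζ : R) ^ i) ^ n =
      d * ∑ j ∈ (range (n + 1)).filter (fun j : ℕ => (j : ℤ) ≡ a [ZMOD d]), (n.choose j : R) := by
  have hpow (i j : ℕ) :
      ((ζ ^ (-a) : Rˣ) : R) ^ i * ((ζ : R) ^ i) ^ j = ((ζ ^ ((j : ℤ) - a) : Rˣ) : R) ^ i := by
    have h : (ζ ^ (-a)) ^ i * (ζ ^ i) ^ j = (ζ ^ ((j : ℤ) - a)) ^ i := by group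
    simpa using congrArg Units.val h
  calc _ = ∑ i ∈ range d, ∑ j ∈ range (n + 1),
          ((ζ ^ ((j : ℤ) - a) : Rˣ) : R) ^ i * n.choose j := by
        refine sum_congr rfl fun i _ => ?_
        rw [add_comm, add_pow, mul_sum]
        refine sum_congr rfl fun j _ => ?_
        rw [one_pow, mul_one, ← mul_assoc, hpow]
    _ = ∑ j ∈ range (n + 1),
          (∑ i ∈ range d, ((ζ ^ ((j : ℤ) - a) : Rˣ) : R) ^ i) * n.choose j := by
        rw [sum_comm]
        simp_rw [sum_mul]
    _ = _ := by
        simp_rw [hζ.geom_sum_zpow_eq hsub, ite_mul, zero_mul, mul_sum, sum_filter,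
          Int.modEq_comm (a := (_ : ℕ)), Int.modEq_iff_dvd]

end IsPrimitiveRoot

namespace ZMod

variable {p k : ℕ} [Fact p.Prime]

theorem isUnit_of_not_natCast_dvd {z : ZMod (p ^ (k + 1))}
    (h : ¬(p : ZMod (p ^ (k + 1))) ∣ z) : IsUnit z := by
  rw [← natCast_zmod_val z, isUnit_natCast_iff_not_dvd_pow Fact.out k.succ_pos]
  exact fun hdvd => h (natCast_zmod_val z ▸ Nat.cast_dvd_cast hdvd)

/-- Elements `≡ 1 (mod p)` have `p`-power order, so such an element of order dividing `p - 1`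
is `1`. -/
theorem eq_one_of_pow_eq_one_of_natCast_dvd_sub_one {x : ZMod (p ^ (k + 1))}
    (hx : x ^ (p - 1) = 1) (hdvd : (p : ZMod (p ^ (k + 1))) ∣ x - 1) : x = 1 := by
  have hpk : x ^ p ^ k = 1 := by
    have h := dvd_sub_pow_of_dvd_sub hdvd k
    rwa [one_pow, ← Nat.cast_pow, natCast_self, zero_dvd_iff, sub_eq_zero] at h
  have hcop : (p ^ k).Coprime (p - 1) :=
    ((Nat.coprime_self_sub_right (Fact.out : p.Prime).one_le).mpr p.coprime_one_right).pow_left k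
  simpa [hcop] using pow_gcd_eq_one.mpr ⟨hpk, hx⟩

theorem isUnit_sub_one_of_pow_eq_one {x : ZMod (p ^ (k + 1))} (hx : x ^ (p - 1) = 1)
    (hx1 : x ≠ 1) : IsUnit (x - 1) :=
  isUnit_of_not_natCast_dvd fun hdvd => hx1 (eq_one_of_pow_eq_one_of_natCast_dvd_sub_one hx hdvd)

theorem isUnit_one_add_or_eq_zero (hodd : Odd p) {x : ZMod (p ^ (k + 1))}
    (hx : x ^ (p - 1) = 1) : IsUnit (1 + x) ∨ 1 + x = 0 := by
  refine or_iff_not_imp_left.mpr fun hunit => ?_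
  have hdvd : (p : ZMod (p ^ (k + 1))) ∣ -x - 1 := by
    rw [show -x - 1 = -(1 + x) by ring, dvd_neg]
    exact not_not.mp (mt isUnit_of_not_natCast_dvd hunit)
  have hpow : (-x) ^ (p - 1) = 1 := by rw [(Nat.Odd.sub_odd hodd odd_one).neg_pow, hx]
  have hneg : -x = 1 := eq_one_of_pow_eq_one_of_natCast_dvd_sub_one hpow hdvd
  linear_combination -hneg

theorem exists_orderOf_eq_sub_one (hp2 : p ≠ 2) :
    ∃ ζ : (ZMod (p ^ (k + 1)))ˣ, orderOf ζ = p - 1 := by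
  have := isCyclic_units_of_prime_pow p Fact.out hp2 (k + 1)
  obtain ⟨g, hg⟩ := IsCyclic.exists_ofOrder_eq_natCard (α := (ZMod (p ^ (k + 1)))ˣ)
  rw [Nat.card_eq_fintype_card, card_units_eq_totient, Nat.totient_prime_pow_succ Fact.out] at hg
  have hcard : p ^ k * (p - 1) ≠ 0 :=
    mul_ne_zero (pow_ne_zero _ (Fact.out : p.Prime).ne_zero)
      (Nat.sub_ne_zero_of_lt (Fact.out : p.Prime).one_lt)
  exact ⟨_, orderOf_pow_orderOf_div (hg ▸ hcard) (hg ▸ dvd_mul_left _ _)⟩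

theorem pow_eq_pow_of_isUnit {x : ZMod (p ^ (k + 1))} (hx : IsUnit x) {N M : ℕ}
    (h : N ≡ M [MOD p ^ k * (p - 1)]) : x ^ N = x ^ M := by
  refine pow_eq_pow_of_modEq h ?_
  obtain ⟨u, rfl⟩ := hx
  rw [← Units.val_pow_eq_pow_val, ← Nat.totient_prime_pow_succ Fact.out, pow_totient, Units.val_one]

theorem one_add_pow_eq_one_add_pow (hodd : Odd p) {x : ZMod (p ^ (k + 1))} (hx : x ^ (p - 1) = 1)
    {N M : ℕ} (hN : N ≠ 0) (hM : M ≠ 0) (h : N ≡ M [MOD p ^ k * (p - 1)]) :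
    (1 + x) ^ N = (1 + x) ^ M := by
  rcases isUnit_one_add_or_eq_zero hodd hx with hunit | hzero
  · exact pow_eq_pow_of_isUnit hunit h
  · rw [hzero, zero_pow hN, zero_pow hM]

end ZMod

theorem stmt_8_general (p : ℕ) (hp : p.Prime) (hodd : Odd p) (t : ℕ)
    (N M : ℕ) (hN : 0 < N) (hM : 0 < M)
    (hdvd : ((p : ℤ) ^ t * ((p : ℤ) - 1)) ∣ ((N : ℤ) - (M : ℤ))) (a : ℤ) :
    ((p : ℤ) ^ (t + 1)) ∣
      ((∑ j ∈ Finset.filter (fun j : ℕ => (j : ℤ) % ((p : ℤ) - 1) = a % ((p : ℤ) - 1))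
            (Finset.range (N + 1)), (N.choose j : ℤ))
        - ∑ j ∈ Finset.filter (fun j : ℕ => (j : ℤ) % ((p : ℤ) - 1) = a % ((p : ℤ) - 1))
            (Finset.range (M + 1)), (M.choose j : ℤ)) := by
  have := Fact.mk hp
  obtain ⟨ζ, hζ⟩ :=
    ZMod.exists_orderOf_eq_sub_one (p := p) (k := t) (by rintro rfl; norm_num at hodd)
  have hprim : IsPrimitiveRoot ζ (p - 1) := hζ ▸ IsPrimitiveRoot.orderOf ζ
  have hroot (i : ℕ) : ((ζ : ZMod (p ^ (t + 1))) ^ i) ^ (p - 1) = 1 := by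
    rw [← pow_mul, mul_comm, pow_mul, ← Units.val_pow_eq_pow_val, hprim.pow_eq_one, Units.val_one,
      one_pow]
  have hsum := hprim.sum_zpow_mul_one_add_pow (fun _ => ZMod.isUnit_sub_one_of_pow_eq_one) a
  have hmod : N ≡ M [MOD p ^ t * (p - 1)] := by
    rw [Nat.modEq_iff_dvd, dvd_sub_comm]
    push_cast [hp.one_le]
    exact hdvd
  have hunit : IsUnit ((p - 1 : ℕ) : ZMod (p ^ (t + 1))) := by
    rw [ZMod.isUnit_iff_coprime]
    exact ((Nat.coprime_self_sub_left hp.one_le).mpr (Nat.coprime_one_left p)).pow_right _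
  rw [← Nat.cast_pow, ← ZMod.intCast_zmod_eq_zero_iff_dvd, ← Nat.cast_pred hp.pos]
  push_cast
  rw [sub_eq_zero]
  -- `j ≡ a [ZMOD p - 1]` in `hsum` unfolds to the `%`-condition of the statement.
  refine hunit.mul_left_cancel ((hsum N).symm.trans (Eq.trans ?_ (hsum M)))
  refine sum_congr rfl fun i _ => ?_
  rw [ZMod.one_add_pow_eq_one_add_pow hodd (hroot i) hN.ne' hM.ne' hmod]

/-- **Key congruence behind Lemma 3.3.** Let `p` be an odd prime, `t ≥ 1`, and let `N, M` be
positive integers with `p^t(p−1) ∣ N − M`. Then for every integer `a`,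
`p^{t+1}` divides `Σ_{0 ≤ j ≤ N, j ≡ a (mod p−1)} C(N,j) − Σ_{0 ≤ j ≤ M, j ≡ a (mod p−1)} C(M,j)`. -/
theorem stmt_8 (p : ℕ) (hp : p.Prime) (hodd : Odd p) (t : ℕ) (ht : 1 ≤ t)
    (N M : ℕ) (hN : 0 < N) (hM : 0 < M)
    (hdvd : ((p : ℤ) ^ t * ((p : ℤ) - 1)) ∣ ((N : ℤ) - (M : ℤ))) (a : ℤ) :
    ((p : ℤ) ^ (t + 1)) ∣
      ((∑ j ∈ Finset.filter (fun j : ℕ => (j : ℤ) % ((p : ℤ) - 1) = a % ((p : ℤ) - 1))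
            (Finset.range (N + 1)), (N.choose j : ℤ))
        - ∑ j ∈ Finset.filter (fun j : ℕ => (j : ℤ) % ((p : ℤ) - 1) = a % ((p : ℤ) - 1))
            (Finset.range (M + 1)), (M.choose j : ℤ)) :=
  stmt_8_general p hp hodd t N M hN hM hdvd a
end

section
/- Assume additionally 1 ≤ c ≤ p−2, 0 ≤ m ≤ p−1 and (b, m) ≠ (p, 0). If 0 ≤ m ≤ l ≤ b−c and 0 ≤ j ≤ c−1, then ν_p( C(r−l, b−m+j(p−1)) ) = 1 and, after clearing the unit denominators, C(b−m−c, l−m) · C(b−m, c) · C(r−l, b−m+j(p−1)) ≡ (−1)^{l−m} · p · C(b−m, j) · C(p−1+m−l, c−1−j) modulo p^2. (Here C(b−m−c, l−m) and C(b−m, c) are units modulo p, so this is equivalent to the statement C(r−l, b−m+j(p−1))/p ≡ (−1)^{l−m} C(b−m, j) C(p−1+m−l, c−1−j) / ( C(b−m−c, l−m) C(b−m, c) ) modulo p.) -/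
open Nat

theorem Nat.dvd_choose_mul_of_dvd {m P i : ℕ} (hP : m ∣ P) (hi : 0 < i) : m ∣ P.choose i * i := by
  obtain ⟨i, rfl⟩ := Nat.exists_eq_add_of_le' hi
  cases P with
  | zero => simp
  | succ P => exact Nat.add_one_mul_choose_eq P i ▸ dvd_mul_of_dvd_left hP _

theorem Int.dvd_and_not_sq_dvd_of_modEq {p q x : ℤ} (hp : p ≠ 0) (hx : x ≡ p * q [ZMOD p ^ 2])
    (hq : ¬ p ∣ q) : p ∣ x ∧ ¬ p ^ 2 ∣ x := by
  have hdiff := hx.dvd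
  constructor
  · simpa using (dvd_mul_right p q).sub ((dvd_pow_self p two_ne_zero).trans hdiff)
  · intro hsq
    have : p * p ∣ p * q := by simpa [pow_two] using dvd_add hdiff hsq
    exact hq ((mul_dvd_mul_iff_left hp).mp this)

theorem Int.mul_modEq_mul_of_modEq_mul {p q x u v : ℤ} (hx : x ≡ p * q [ZMOD p ^ 2])
    (hq : u * q ≡ v [ZMOD p]) : u * x ≡ p * v [ZMOD p ^ 2] :=
  calc u * x ≡ u * (p * q) [ZMOD p ^ 2] := hx.mul_left u
    _ = p * (u * q) := by ring
    _ ≡ p * v [ZMOD p ^ 2] := by rw [pow_two]; exact hq.mul_left'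

section

variable {p : ℕ} [Fact p.Prime]

namespace ZMod

theorem natCast_factorial_ne_zero {n : ℕ} (hn : n < p) : (n ! : ZMod p) ≠ 0 := by
  rw [Ne, ZMod.natCast_eq_zero_iff, (Fact.out : p.Prime).dvd_factorial]
  omega

theorem neg_one_pow_mul_factorial_mul_factorial {s e : ℕ} (h : s + e + 1 = p) :
    (-1) ^ s * (s ! * e ! : ZMod p) = -1 := by
  have hdesc := congrArg (Nat.cast : ℕ → ZMod p)
    (Nat.factorial_mul_descFactorial (n := p - 1) (k := s) (by omega))
  rw [show p - 1 - s = e by omega] at hdesc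
  push_cast at hdesc
  rw [ZMod.cast_descFactorial (by omega), ZMod.wilsons_lemma] at hdesc
  linear_combination hdesc

theorem natCast_ascFactorial_mul_add (q n k : ℕ) :
    ((q * p + n).ascFactorial k : ZMod p) = n.ascFactorial k := by
  simp [Nat.ascFactorial_eq_prod_range]

theorem exists_factorial_mul_eq_pow_mul (q : ℕ) :
    ∃ W : ℕ, (q * p)! = p ^ q * W ∧ (W : ZMod p) = (-1) ^ q * q ! := by
  induction q with
  | zero => exact ⟨1, by simp⟩
  | succ q ih =>
    obtain ⟨W, hW, hWcast⟩ := ih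
    have hp : 0 < p := (Fact.out : p.Prime).pos
    refine ⟨W * (q * p + 1).ascFactorial (p - 1) * (q + 1), ?_, ?_⟩
    · have hsucc : (q + 1) * p = q * p + (p - 1) + 1 := by rw [add_mul]; omega
      rw [hsucc, Nat.factorial_succ, ← Nat.factorial_mul_ascFactorial, hW, ← hsucc]
      ring
    · push_cast
      rw [hWcast, natCast_ascFactorial_mul_add, one_ascFactorial, ZMod.wilsons_lemma,
        Nat.factorial_succ]
      push_cast
      ring

theorem exists_factorial_mul_add_eq_pow_mul (q s : ℕ) :
    ∃ W : ℕ, (q * p + s)! = p ^ q * W ∧ (W : ZMod p) = (-1) ^ q * q ! * s ! := by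
  obtain ⟨W, hW, hWcast⟩ := exists_factorial_mul_eq_pow_mul (p := p) q
  refine ⟨W * (q * p + 1).ascFactorial s, ?_, ?_⟩
  · rw [← Nat.factorial_mul_ascFactorial, hW, mul_assoc]
  · push_cast
    rw [hWcast, natCast_ascFactorial_mul_add, one_ascFactorial]

theorem natCast_add_choose_eq_div {x y : ℕ} (h : x + y < p) :
    ((x + y).choose x : ZMod p) = (x + y)! / (x ! * y !) := by
  rw [eq_div_iff (mul_ne_zero (natCast_factorial_ne_zero (by omega))
    (natCast_factorial_ne_zero (by omega))), ← mul_assoc]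
  have h := congrArg (Nat.cast : ℕ → ZMod p) (Nat.add_choose_mul_factorial_mul_factorial y x)
  rw [add_comm y x] at h
  push_cast at h
  linear_combination h

theorem choose_mul_choose_mul_eq {s a j k f e : ℕ} (hp : s + f + e + 1 = p)
    (hk : k = s + a + f + 1) (hjk : j + k < p) {q : ZMod p}
    (hq : q * (j ! * k ! * f ! * e !) = -((j + f + 1)! * a !)) :
    ((s + a).choose s * (j + k).choose (j + f + 1) * q : ZMod p) =
      (-1) ^ s * (j + k).choose j * (f + e).choose f := by
  have hfac : ∀ n, n < p → (n ! : ZMod p) ≠ 0 := fun n hn => natCast_factorial_ne_zero hn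
  have hwilson := neg_one_pow_mul_factorial_mul_factorial (p := p) (s := s) (e := f + e) (by omega)
  have hden : (j ! * k ! * f ! * e ! : ZMod p) ≠ 0 :=
    mul_ne_zero (mul_ne_zero (mul_ne_zero (hfac _ (by omega)) (hfac _ (by omega)))
      (hfac _ (by omega))) (hfac _ (by omega))
  rw [eq_div_of_mul_eq hden hq, natCast_add_choose_eq_div (by omega),
    natCast_add_choose_eq_div (by omega), natCast_add_choose_eq_div (by omega)]
  rw [show j + k = (j + f + 1) + (s + a) by omega, natCast_add_choose_eq_div (by omega)]
  have := hfac s (by omega); have := hfac a (by omega); have := hfac (s + a) (by omega)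
  have := hfac (j + f + 1) (by omega)
  field_simp
  rw [← neg_div, div_left_inj' hden]
  linear_combination (-((j + f + 1 + (s + a))! : ZMod p)) * hwilson

end ZMod

theorem exists_choose_eq_prime_mul {a k e j f : ℕ} (hke : k + e = a + p) (hk : k < p)
    (he : e < p) (hj : j < p) (hf : f < p) :
    ∃ Q : ℕ, (a + (j + f + 1) * p).choose (k + j * p) = p * Q ∧
      (Q : ZMod p) * (j ! * k ! * f ! * e !) = -((j + f + 1)! * a !) := by
  have hp : p.Prime := Fact.out
  -- In `n! = C(n, k) k! (n - k)!` the left side carries one more factor `p` than the right.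
  obtain ⟨W₁, hW₁, hW₁cast⟩ := ZMod.exists_factorial_mul_add_eq_pow_mul (p := p) (j + f + 1) a
  obtain ⟨W₂, hW₂, hW₂cast⟩ := ZMod.exists_factorial_mul_add_eq_pow_mul (p := p) j k
  obtain ⟨W₃, hW₃, hW₃cast⟩ := ZMod.exists_factorial_mul_add_eq_pow_mul (p := p) f e
  have hfac := Nat.add_choose_mul_factorial_mul_factorial (f * p + e) (j * p + k)
  rw [show f * p + e + (j * p + k) = (j + f + 1) * p + a by linear_combination hke, hW₁, hW₂,
    hW₃, add_comm (j * p), add_comm ((j + f + 1) * p)] at hfac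
  set B := (a + (j + f + 1) * p).choose (k + j * p)
  have hBW : B * (W₂ * W₃) = p * W₁ := by
    apply Nat.eq_of_mul_eq_mul_left (pow_pos hp.pos (j + f))
    linear_combination hfac
  have hW₂₃ : ((W₂ * W₃ : ℕ) : ZMod p) ≠ 0 := by
    push_cast
    rw [hW₂cast, hW₃cast]
    simp [ZMod.natCast_factorial_ne_zero, *]
  obtain ⟨Q, hQ⟩ : p ∣ B := by
    refine (hp.dvd_mul.mp ⟨W₁, hBW⟩).resolve_right ?_
    rwa [← ZMod.natCast_eq_zero_iff]
  refine ⟨Q, hQ, ?_⟩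
  rw [hQ, mul_assoc, Nat.mul_left_cancel_iff hp.pos] at hBW
  have hcast := congrArg (Nat.cast : ℕ → ZMod p) hBW
  push_cast at hcast
  rw [hW₁cast, hW₂cast, hW₃cast] at hcast
  have hsq : ((-1 : ZMod p) ^ (j + f)) ^ 2 = 1 := by rw [← pow_mul, pow_mul', neg_one_sq, one_pow]
  linear_combination (-1 : ZMod p) ^ (j + f) * hcast
    - (Q * (j ! * k ! * f ! * e !) + (j + f + 1)! * a ! : ZMod p) * hsq

theorem prime_dvd_choose_add_mul {a k : ℕ} (hak : a < k) (hk : k < p) (c v : ℕ) :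
    p ∣ (a + c * p).choose (k + v * p) := by
  have hmod := Choose.choose_modEq_choose_mod_mul_choose_div_nat (p := p) (n := a + c * p)
    (k := k + v * p)
  rw [Nat.add_mul_mod_self_right, Nat.add_mul_mod_self_right, Nat.mod_eq_of_lt (hak.trans hk),
    Nat.mod_eq_of_lt hk, Nat.choose_eq_zero_of_lt hak, zero_mul] at hmod
  exact Nat.modEq_zero_iff_dvd.mp hmod

theorem sq_dvd_choose_mul_choose {P a c k j i w : ℕ} (hP : p ^ 2 ∣ P) (hak : a < k) (hk : k < p)
    (hj : j < p) (hi : 0 < i) (hiw : i + w = k + j * p) :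
    p ^ 2 ∣ P.choose i * (a + c * p).choose w := by
  have hp : p.Prime := Fact.out
  have hPi := Nat.dvd_choose_mul_of_dvd hP hi
  by_cases hpi : p ∣ i
  · obtain ⟨u, rfl⟩ := hpi
    have hu : 0 < u := Nat.pos_of_mul_pos_left hi
    have huj : u ≤ j := by nlinarith
    have hpu : ¬ p ∣ u := fun h => by have := Nat.le_of_dvd hu h; omega
    have hPu : p ∣ P.choose (p * u) := by
      refine (Nat.Coprime.dvd_of_dvd_mul_right (hp.coprime_iff_not_dvd.2 hpu)
        (Nat.dvd_of_mul_dvd_mul_left hp.pos ?_))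
      rw [← pow_two]
      convert hPi using 1
      ring
    have hw : w = k + (j - u) * p := by
      rw [Nat.sub_mul]
      have : u * p ≤ j * p := Nat.mul_le_mul_right p huj
      rw [mul_comm p u] at hiw
      omega
    rw [pow_two, hw]
    exact mul_dvd_mul hPu (prime_dvd_choose_add_mul hak hk c _)
  · exact dvd_mul_of_dvd_left
      ((Nat.Coprime.pow_left 2 (hp.coprime_iff_not_dvd.2 hpi)).dvd_of_dvd_mul_right hPi) _

theorem choose_add_modEq_choose {P a c k j : ℕ} (hP : p ^ 2 ∣ P) (hak : a < k) (hk : k < p)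
    (hj : j < p) :
    (a + c * p + P).choose (k + j * p) ≡ (a + c * p).choose (k + j * p) [MOD p ^ 2] := by
  rw [← ZMod.natCast_eq_natCast_iff, add_comm _ P, Nat.add_choose_eq]
  push_cast
  rw [Finset.sum_eq_single_of_mem (0, k + j * p) (by simp)]
  · simp
  rintro ⟨i, w⟩ hiw hne
  rw [Finset.HasAntidiagonal.mem_antidiagonal] at hiw
  have hi : 0 < i := Nat.pos_of_ne_zero fun h => hne (by subst h; simp at hiw ⊢; omega)
  exact_mod_cast (ZMod.natCast_eq_zero_iff _ _).2 (sq_dvd_choose_mul_choose hP hak hk hj hi hiw)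

theorem choose_modEq_prime_mul_choose_mul_choose {s a j k f e P : ℕ} (hp : s + f + e + 1 = p)
    (hk : k = s + a + f + 1) (hjk : j + k < p) (hP : p ^ 2 ∣ P) :
    ((p : ℤ) ∣ (a + (j + f + 1) * p + P).choose (k + j * p) ∧
      ¬ (p : ℤ) ^ 2 ∣ (a + (j + f + 1) * p + P).choose (k + j * p)) ∧
    ((s + a).choose s * (j + k).choose (j + f + 1) * (a + (j + f + 1) * p + P).choose (k + j * p)
      : ℤ) ≡ (-1) ^ s * p * (j + k).choose j * (f + e).choose f [ZMOD p ^ 2] := by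
  obtain ⟨Q, hQ, hQcast⟩ := exists_choose_eq_prime_mul (p := p) (a := a) (k := k) (e := e)
    (j := j) (f := f) (by omega) (by omega) (by omega) (by omega) (by omega)
  have hB : ((a + (j + f + 1) * p + P).choose (k + j * p) : ℤ) ≡ p * Q [ZMOD p ^ 2] := by
    have := choose_add_modEq_choose (c := j + f + 1) (j := j) hP (by omega : a < k) (by omega)
      (by omega)
    rw [hQ] at this
    exact_mod_cast Int.natCast_modEq_iff.mpr this
  have hunit : ((s + a).choose s * (j + k).choose (j + f + 1) * Q : ℤ) ≡
      (-1) ^ s * (j + k).choose j * (f + e).choose f [ZMOD p] := by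
    rw [← ZMod.intCast_eq_intCast_iff]
    push_cast
    exact ZMod.choose_mul_choose_mul_eq hp hk hjk hQcast
  have hpQ : ¬ (p : ℤ) ∣ Q := by
    rw [Int.natCast_dvd_natCast, ← ZMod.natCast_eq_zero_iff]
    intro h
    rw [h, zero_mul, zero_eq_neg] at hQcast
    exact mul_ne_zero (ZMod.natCast_factorial_ne_zero (by omega))
      (ZMod.natCast_factorial_ne_zero (by omega)) hQcast
  refine ⟨Int.dvd_and_not_sq_dvd_of_modEq (by exact_mod_cast (Fact.out : p.Prime).ne_zero) hB hpQ,
    ?_⟩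
  convert Int.mul_modEq_mul_of_modEq_mul hB hunit using 1
  ring

end

theorem iC_eq_choose {n k : ℤ} {N K : ℕ} (hn : n = N) (hk : k = K) : iC n k = N.choose K := by
  subst hn hk
  by_cases hKN : K ≤ N
  · simp [iC, hKN]
  · simp [iC, hKN, Nat.choose_eq_zero_of_lt (not_le.mp hKN)]

theorem stmt_10_general (p : ℕ) (hp : p.Prime)
    (b c m j l r : ℤ) (t d : ℕ)
    (hbp : b ≤ (p : ℤ)) (ht : 2 ≤ t)
    (hr : r = b + c * ((p : ℤ) - 1) + (p : ℤ) ^ t * ((p : ℤ) - 1) * (d : ℤ))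
    (hm0 : 0 ≤ m)
    (hbm : ¬ (b = (p : ℤ) ∧ m = 0))
    (hml : m ≤ l) (hlb : l ≤ b - c) (hj0 : 0 ≤ j) (hjc : j ≤ c - 1) :
    ((p : ℤ) ∣ iC (r - l) (b - m + j * ((p : ℤ) - 1)) ∧
      ¬ ((p : ℤ) ^ 2 ∣ iC (r - l) (b - m + j * ((p : ℤ) - 1)))) ∧
    (iC (b - m - c) (l - m) * iC (b - m) c * iC (r - l) (b - m + j * ((p : ℤ) - 1)) ≡
      (-1 : ℤ) ^ (l - m).toNat * (p : ℤ) * iC (b - m) j * iC ((p : ℤ) - 1 + m - l) (c - 1 - j)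
      [ZMOD ((p : ℤ) ^ 2)]) := by
  have : Fact p.Prime := ⟨hp⟩
  obtain ⟨s, hs⟩ : ∃ s : ℕ, l - m = s := ⟨(l - m).toNat, by omega⟩
  obtain ⟨a, ha⟩ : ∃ a : ℕ, b - l - c = a := ⟨(b - l - c).toNat, by omega⟩
  obtain ⟨f, hf⟩ : ∃ f : ℕ, c - 1 - j = f := ⟨(c - 1 - j).toNat, by omega⟩
  obtain ⟨e, he⟩ : ∃ e : ℕ, (p : ℤ) - 1 + m - l - (c - 1 - j) = e :=
    ⟨((p : ℤ) - 1 + m - l - (c - 1 - j)).toNat, by omega⟩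
  lift j to ℕ using hj0
  have hP : p ^ 2 ∣ p ^ t * (p - 1) * d := (pow_dvd_pow p ht).mul_right _ |>.mul_right _
  have key := choose_modEq_prime_mul_choose_mul_choose (s := s) (a := a) (j := j) (f := f) (e := e)
    (by omega) rfl (by omega) hP
  rw [iC_eq_choose (n := r - l) (N := a + (j + f + 1) * p + p ^ t * (p - 1) * d)
      (K := s + a + f + 1 + j * p) ?_ ?_,
    iC_eq_choose (N := s + a) (K := s) (by omega) hs,
    iC_eq_choose (N := j + (s + a + f + 1)) (K := j + f + 1) (by omega) (by omega),
    iC_eq_choose (N := j + (s + a + f + 1)) (K := j) (by omega) rfl,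
    iC_eq_choose (N := f + e) (K := f) (by omega) hf, hs, Int.toNat_natCast]
  · exact key
  · rw [hr]
    push_cast [Nat.cast_sub hp.one_le]
    linear_combination ha + (p : ℤ) * hf
  · push_cast
    linear_combination hs + ha + hf

/-- **Lemma 3.5 (1).** Let `p` be an odd prime, `2 ≤ b ≤ p`, `t ≥ 2`, `d ≥ 0`,
`r = b + c(p−1) + p^t(p−1)d`, `1 ≤ c ≤ p−2`, `0 ≤ m ≤ p−1`, `(b,m) ≠ (p,0)`.
If `0 ≤ m ≤ l ≤ b−c` and `0 ≤ j ≤ c−1`, then `ν_p(C(r−l, b−m+j(p−1))) = 1` and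
`C(b−m−c, l−m)·C(b−m, c)·C(r−l, b−m+j(p−1)) ≡ (−1)^{l−m}·p·C(b−m, j)·C(p−1+m−l, c−1−j)`
modulo `p²`. -/
theorem stmt_10 (p : ℕ) (hp : p.Prime) (hodd : Odd p)
    (b c m j l r : ℤ) (t d : ℕ)
    (hb2 : 2 ≤ b) (hbp : b ≤ (p : ℤ)) (ht : 2 ≤ t)
    (hr : r = b + c * ((p : ℤ) - 1) + (p : ℤ) ^ t * ((p : ℤ) - 1) * (d : ℤ))
    (hc1 : 1 ≤ c) (hcp : c ≤ (p : ℤ) - 2)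
    (hm0 : 0 ≤ m) (hmp : m ≤ (p : ℤ) - 1)
    (hbm : ¬ (b = (p : ℤ) ∧ m = 0))
    (hml : m ≤ l) (hlb : l ≤ b - c) (hj0 : 0 ≤ j) (hjc : j ≤ c - 1) :
    ((p : ℤ) ∣ iC (r - l) (b - m + j * ((p : ℤ) - 1)) ∧
      ¬ ((p : ℤ) ^ 2 ∣ iC (r - l) (b - m + j * ((p : ℤ) - 1)))) ∧
    (iC (b - m - c) (l - m) * iC (b - m) c * iC (r - l) (b - m + j * ((p : ℤ) - 1)) ≡
      (-1 : ℤ) ^ (l - m).toNat * (p : ℤ) * iC (b - m) j * iC ((p : ℤ) - 1 + m - l) (c - 1 - j)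
      [ZMOD ((p : ℤ) ^ 2)]) :=
  stmt_10_general p hp b c m j l r t d hbp ht hr hm0 hbm hml hlb hj0 hjc
end

section
/- Let s = b + c(p−1) and r = s + p^t(p−1)d with t ≥ 2, d ≥ 1, 2 ≤ b ≤ p, 0 ≤ c ≤ p−1, 0 ≤ m ≤ p−1, s ≥ m, and let l be an integer with 0 ≤ l ≤ m. Then ν_p( C(r−l, r−m) ) = ν_p( C(r−l, s−m) ), and moreover ν_p( C(r−l, r−m) ) equals: 0 if (b,c) = (p,0) and m = 0; 1 if (b,c) = (p,0), l = 0 and m ≠ 0; 0 if (b,c) = (p,0), l ≠ 0 and m ≠ 0; 0 if 0 ≤ m ≤ b−c and (b,c) ≠ (p,0); 1 if b−c+1 ≤ m ≤ b−c+p and 0 ≤ l ≤ b−c; 0 if b−c+1 ≤ m ≤ b−c+p and b−c+1 ≤ l ≤ b−c+p; 1 if b−c+p+1 ≤ m ≤ b−c+2p and b−c+1 ≤ l ≤ b−c+p; 0 if b−c+p+1 ≤ m ≤ b−c+2p and b−c+p+1 ≤ l ≤ b−c+2p. -/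
section

variable {p x y D : ℕ}

theorem add_mod_pow_add_mod_pow_lt_of_sq_dvd {i : ℕ} (hp : 0 < p) (hi : 2 ≤ i)
    (hxy : x + y < p ^ 2) (hD : p ^ 2 ∣ D) :
    (x + D) % p ^ i + y % p ^ i < p ^ i := by
  have hsq : p ^ 2 ∣ p ^ i := pow_dvd_pow p hi
  have hsq_le : p ^ 2 ≤ p ^ i := Nat.le_of_dvd (by positivity) hsq
  set E := D % p ^ i with hE
  have hE_lt : E < p ^ i := Nat.mod_lt _ (by positivity)
  -- `E` and `p ^ i` are both multiples of `p ^ 2`, so they are at least `p ^ 2` apart.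
  have hE_add : E + p ^ 2 ≤ p ^ i := by
    have : p ^ 2 ≤ p ^ i - E :=
      Nat.le_of_dvd (by omega) (Nat.dvd_sub hsq ((Nat.dvd_mod_iff hsq).mpr hD))
    omega
  have hx : (x + D) % p ^ i = x + E := by
    rw [Nat.add_mod, Nat.mod_eq_of_lt (by omega : x < p ^ i), ← hE]
    exact Nat.mod_eq_of_lt (by omega)
  rw [hx, Nat.mod_eq_of_lt (by omega : y < p ^ i)]
  omega

theorem padicValNat_choose_add_of_sq_dvd [hp : Fact p.Prime] (hxy : x + y < p ^ 2)
    (hD : p ^ 2 ∣ D) :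
    padicValNat p ((x + D + y).choose (x + D)) = if p ≤ x % p + y % p then 1 else 0 := by
  set b := Nat.log p (y + (x + D)) + 2
  rw [add_comm (x + D) y, padicValNat_choose' (b := b) (by omega)]
  have hcarries : (Finset.Ico 1 b).filter (fun i => p ^ i ≤ (x + D) % p ^ i + y % p ^ i) =
      ({1} : Finset ℕ).filter (fun i => p ^ i ≤ (x + D) % p ^ i + y % p ^ i) := by
    ext i
    simp only [Finset.mem_filter, Finset.mem_Ico, Finset.mem_singleton]
    constructor
    · rintro ⟨⟨hi1, -⟩, hcarry⟩
      refine ⟨?_, hcarry⟩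
      by_contra hi
      exact (add_mod_pow_add_mod_pow_lt_of_sq_dvd hp.out.pos (by omega) hxy hD).not_ge hcarry
    · rintro ⟨rfl, hcarry⟩
      exact ⟨⟨le_rfl, by omega⟩, hcarry⟩
  have hunits : (x + D) % p = x % p := by
    obtain ⟨e, rfl⟩ := (dvd_pow_self p two_ne_zero).trans hD
    exact Nat.add_mul_mod_self_left x p e
  rw [hcarries, Finset.filter_singleton, pow_one, hunits]
  split_ifs <;> rfl

end

theorem padicValInt_iC_natCast {p n k : ℕ} (h : k ≤ n) :
    padicValInt p (iC n k) = padicValNat p (n.choose k) := by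
  rw [iC, if_pos ⟨by positivity, by exact_mod_cast h⟩]
  simp [padicValInt.of_nat]

theorem padicValInt_iC_of_sq_dvd {p : ℕ} [Fact p.Prime] {x y D : ℤ} (hx : 0 ≤ x) (hy : 0 ≤ y)
    (hD : 0 ≤ D) (hxy : x + y < (p : ℤ) ^ 2) (hpD : (p : ℤ) ^ 2 ∣ D) :
    padicValInt p (iC (x + D + y) (x + D)) = (if (p : ℤ) ≤ x % p + y % p then 1 else 0) ∧
      padicValInt p (iC (x + D + y) x) = (if (p : ℤ) ≤ x % p + y % p then 1 else 0) := by
  lift x to ℕ using hx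
  lift y to ℕ using hy
  lift D to ℕ using hD
  have hxy' : x + y < p ^ 2 := by exact_mod_cast hxy
  have hpD' : p ^ 2 ∣ D := by exact_mod_cast hpD
  have hcond : ((p : ℤ) ≤ x % p + y % p) ↔ p ≤ x % p + y % p := by
    rw [← Int.natCast_mod, ← Int.natCast_mod]
    exact_mod_cast Iff.rfl
  simp only [hcond]
  constructor
  · rw [show (x : ℤ) + D + y = ((x + D + y : ℕ) : ℤ) by push_cast; ring,
      show (x : ℤ) + D = ((x + D : ℕ) : ℤ) by push_cast; ring, padicValInt_iC_natCast (by omega),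
      padicValNat_choose_add_of_sq_dvd hxy' hpD']
  · rw [show (x : ℤ) + D + y = ((y + D + x : ℕ) : ℤ) by push_cast; ring,
      padicValInt_iC_natCast (by omega), ← Nat.choose_symm_add,
      padicValNat_choose_add_of_sq_dvd (by omega) hpD', add_comm (y % p)]

theorem Int.emod_eq_add_mul_of_nonneg_of_lt {u n : ℤ} (k : ℤ) (h0 : 0 ≤ u + k * n)
    (h1 : u + k * n < n) : u % n = u + k * n := by
  rw [← Int.add_mul_emod_self_right u k n, Int.emod_eq_of_lt h0 h1]

theorem stmt_12_general (p : ℕ) (hp : p.Prime)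
    (b c m l s r : ℤ) (t d : ℕ)
    (ht : 2 ≤ t)
    (hbp : b ≤ (p : ℤ)) (hc0 : 0 ≤ c) (hcp : c ≤ (p : ℤ) - 1)
    (hmp : m ≤ (p : ℤ) - 1)
    (hs : s = b + c * ((p : ℤ) - 1))
    (hr : r = s + (p : ℤ) ^ t * ((p : ℤ) - 1) * (d : ℤ))
    (hms : m ≤ s) (hl0 : 0 ≤ l) (hlm : l ≤ m) :
    padicValInt p (iC (r - l) (r - m)) = padicValInt p (iC (r - l) (s - m)) ∧
    ((b = (p : ℤ) ∧ c = 0 ∧ m = 0) → padicValInt p (iC (r - l) (r - m)) = 0) ∧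
    ((b = (p : ℤ) ∧ c = 0 ∧ l = 0 ∧ m ≠ 0) → padicValInt p (iC (r - l) (r - m)) = 1) ∧
    ((b = (p : ℤ) ∧ c = 0 ∧ l ≠ 0 ∧ m ≠ 0) → padicValInt p (iC (r - l) (r - m)) = 0) ∧
    ((0 ≤ m ∧ m ≤ b - c ∧ ¬ (b = (p : ℤ) ∧ c = 0)) →
      padicValInt p (iC (r - l) (r - m)) = 0) ∧
    ((b - c + 1 ≤ m ∧ m ≤ b - c + p ∧ 0 ≤ l ∧ l ≤ b - c) →
      padicValInt p (iC (r - l) (r - m)) = 1) ∧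
    ((b - c + 1 ≤ m ∧ m ≤ b - c + p ∧ b - c + 1 ≤ l ∧ l ≤ b - c + p) →
      padicValInt p (iC (r - l) (r - m)) = 0) ∧
    ((b - c + p + 1 ≤ m ∧ m ≤ b - c + 2 * p ∧ b - c + 1 ≤ l ∧ l ≤ b - c + p) →
      padicValInt p (iC (r - l) (r - m)) = 1) ∧
    ((b - c + p + 1 ≤ m ∧ m ≤ b - c + 2 * p ∧ b - c + p + 1 ≤ l ∧ l ≤ b - c + 2 * p) →
      padicValInt p (iC (r - l) (r - m)) = 0) := by
  have : Fact p.Prime := ⟨hp⟩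
  have hp1 : (1 : ℤ) < p := by exact_mod_cast hp.one_lt
  set D : ℤ := (p : ℤ) ^ t * ((p : ℤ) - 1) * d
  have hD : 0 ≤ D := mul_nonneg (mul_nonneg (by positivity) (by omega)) (by positivity)
  have hpD : (p : ℤ) ^ 2 ∣ D := ((pow_dvd_pow _ ht).mul_right _).mul_right _
  have hsp : s < (p : ℤ) ^ 2 := by nlinarith
  obtain ⟨hrm, hsm⟩ := padicValInt_iC_of_sq_dvd (x := s - m) (y := m - l) (by omega) (by omega)
    hD (by omega) hpD
  rw [show s - m + D + (m - l) = r - l by omega, show s - m + D = r - m by omega] at hrm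
  rw [show s - m + D + (m - l) = r - l by omega] at hsm
  have hres : (s - m) % p + (m - l) % p = (b - c - m) % p + (m - l) := by
    rw [show s - m = b - c - m + c * p by rw [hs]; ring, Int.add_mul_emod_self_right,
      Int.emod_eq_of_lt (by omega : 0 ≤ m - l) (by omega)]
  rw [hres] at hrm hsm
  -- In each case below, `k` is the shift that brings `b - c - m` into `[0, p)`.
  have hval : ∀ k : ℤ, 0 ≤ b - c - m + k * p → b - c - m + k * p < p →
      padicValInt p (iC (r - l) (r - m)) = if (p : ℤ) ≤ b - c - m + k * p + (m - l) then 1 else 0 :=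
    fun k h0 h1 => by rw [hrm, Int.emod_eq_add_mul_of_nonneg_of_lt k h0 h1]
  refine ⟨hrm.trans hsm.symm, ?_, ?_, ?_, ?_, ?_, ?_, ?_, ?_⟩
  · rintro ⟨rfl, rfl, rfl⟩
    rw [hval (-1) (by omega) (by omega), if_neg (by omega)]
  · rintro ⟨rfl, rfl, hl, hm⟩
    rw [hval 0 (by omega) (by omega), if_pos (by omega)]
  · rintro ⟨rfl, rfl, hl, hm⟩
    rw [hval 0 (by omega) (by omega), if_neg (by omega)]
  · rintro ⟨-, hm_hi, hbc⟩
    rw [hval 0 (by omega) (by omega), if_neg (by omega)]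
  · rintro ⟨hm_lo, hm_hi, -, hl_hi⟩
    rw [hval 1 (by omega) (by omega), if_pos (by omega)]
  · rintro ⟨hm_lo, hm_hi, hl_lo, -⟩
    rw [hval 1 (by omega) (by omega), if_neg (by omega)]
  · rintro ⟨hm_lo, hm_hi, -, hl_hi⟩
    rw [hval 2 (by omega) (by omega), if_pos (by omega)]
  · rintro ⟨hm_lo, hm_hi, hl_lo, -⟩
    rw [hval 2 (by omega) (by omega), if_neg (by omega)]

/-- **Lemma 3.6, first part.** Let `p` be an odd prime, `s = b + c(p−1)`,
`r = s + p^t(p−1)d` with `t ≥ 2`, `d ≥ 1`, `2 ≤ b ≤ p`, `0 ≤ c ≤ p−1`, `0 ≤ m ≤ p−1`,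
`s ≥ m`, `0 ≤ l ≤ m`. Then `ν_p(C(r−l, r−m)) = ν_p(C(r−l, s−m))`, and `ν_p(C(r−l, r−m))`
takes the stated value `0` or `1` in each of the listed cases. -/
theorem stmt_12 (p : ℕ) (hp : p.Prime) (hodd : Odd p)
    (b c m l s r : ℤ) (t d : ℕ)
    (ht : 2 ≤ t) (hd : 1 ≤ d)
    (hb2 : 2 ≤ b) (hbp : b ≤ (p : ℤ)) (hc0 : 0 ≤ c) (hcp : c ≤ (p : ℤ) - 1)
    (hm0 : 0 ≤ m) (hmp : m ≤ (p : ℤ) - 1)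
    (hs : s = b + c * ((p : ℤ) - 1))
    (hr : r = s + (p : ℤ) ^ t * ((p : ℤ) - 1) * (d : ℤ))
    (hms : m ≤ s) (hl0 : 0 ≤ l) (hlm : l ≤ m) :
    padicValInt p (iC (r - l) (r - m)) = padicValInt p (iC (r - l) (s - m)) ∧
    ((b = (p : ℤ) ∧ c = 0 ∧ m = 0) → padicValInt p (iC (r - l) (r - m)) = 0) ∧
    ((b = (p : ℤ) ∧ c = 0 ∧ l = 0 ∧ m ≠ 0) → padicValInt p (iC (r - l) (r - m)) = 1) ∧
    ((b = (p : ℤ) ∧ c = 0 ∧ l ≠ 0 ∧ m ≠ 0) → padicValInt p (iC (r - l) (r - m)) = 0) ∧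
    ((0 ≤ m ∧ m ≤ b - c ∧ ¬ (b = (p : ℤ) ∧ c = 0)) →
      padicValInt p (iC (r - l) (r - m)) = 0) ∧
    ((b - c + 1 ≤ m ∧ m ≤ b - c + p ∧ 0 ≤ l ∧ l ≤ b - c) →
      padicValInt p (iC (r - l) (r - m)) = 1) ∧
    ((b - c + 1 ≤ m ∧ m ≤ b - c + p ∧ b - c + 1 ≤ l ∧ l ≤ b - c + p) →
      padicValInt p (iC (r - l) (r - m)) = 0) ∧
    ((b - c + p + 1 ≤ m ∧ m ≤ b - c + 2 * p ∧ b - c + 1 ≤ l ∧ l ≤ b - c + p) →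
      padicValInt p (iC (r - l) (r - m)) = 1) ∧
    ((b - c + p + 1 ≤ m ∧ m ≤ b - c + 2 * p ∧ b - c + p + 1 ≤ l ∧ l ≤ b - c + 2 * p) →
      padicValInt p (iC (r - l) (r - m)) = 0) :=
  stmt_12_general p hp b c m l s r t d ht hbp hc0 hcp hmp hs hr hms hl0 hlm
end

section
/- Let p be a prime and let b, c, m be nonnegative integers with m + c ≤ b and b − m ≤ p − 2. Then the (c+1)×(c+1) matrix B over the field F_p with rows indexed by 0 ≤ j ≤ c and columns indexed by 0 ≤ i ≤ c, whose (j,i) entry is the reduction modulo p of C(b−m−c+1+i, b−m−j), is invertible. -/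
/-!
Write `N = b - m`. Scaling row `j` by `(N - j)!` and column `i` by `(i + 1)!` turns the entry
`C(N - c + 1 + i, N - j)` into `(c - j)! (N - c + 1 + i)! C(i + 1, c - j)`, because the two
binomial coefficients have the same difference `i + j + 1 - c` between top and bottom. The matrix
`C(i + 1, c - j)` is a row permutation of a Pascal-type matrix of determinant `1`, and all the
factorials involved are at most `(N + 1)!`, hence units modulo `p` since `N + 1 < p`.
-/

open Matrix Nat

theorem factorial_mul_add_factorial_mul_add_choose_comm (d k k' : ℕ) :
    k ! * ((d + k')! * (d + k).choose k) = k' ! * ((d + k)! * (d + k').choose k') := by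
  apply Nat.eq_of_mul_eq_mul_right (factorial_pos d)
  calc k ! * ((d + k')! * (d + k).choose k) * d !
      = (d + k')! * ((d + k).choose k * d ! * k !) := by ring
    _ = (d + k)! * ((d + k').choose k' * d ! * k' !) := by
      rw [add_choose_mul_factorial_mul_factorial, add_choose_mul_factorial_mul_factorial, mul_comm]
    _ = k' ! * ((d + k)! * (d + k').choose k') * d ! := by ring

theorem factorial_mul_factorial_mul_choose_eq {N c j : ℕ} (i : ℕ) (hj : j ≤ c) (hc : c ≤ N) :
    (N - j)! * ((i + 1)! * (N - c + 1 + i).choose (N - j)) =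
      (c - j)! * ((N - c + 1 + i)! * (i + 1).choose (c - j)) := by
  by_cases hij : c ≤ i + 1 + j
  · obtain ⟨d, hi⟩ : ∃ d, i + 1 = d + (c - j) := ⟨i + 1 + j - c, by omega⟩
    have hN : N - c + 1 + i = d + (N - j) := by omega
    rw [hN, hi]
    exact factorial_mul_add_factorial_mul_add_choose_comm _ _ _
  · rw [choose_eq_zero_of_lt (by omega), choose_eq_zero_of_lt (by omega)]
    simp

section
variable {R : Type*} [CommRing R]

theorem det_of_choose_succ_eq_one (n : ℕ) :
    (of fun k i : Fin n => ((i.val + 1).choose k.val : R)).det = 1 := by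
  -- Pascal's rule `C(i + 1, k) = C(i, k) + C(i, k - 1)` factors the matrix as
  -- `(1 + S) * U` with `S` the subdiagonal shift and `U` unitriangular.
  let U : Matrix (Fin n) (Fin n) R := of fun t i => (i.val.choose t.val : R)
  let S : Matrix (Fin n) (Fin n) R := of fun k t => if k.val = t.val + 1 then 1 else 0
  have hU : U.det = 1 := by
    rw [det_of_isUpperTriangular fun t i (hit : i < t) => by simp [U, choose_eq_zero_of_lt hit]]
    simp [U]
  have hL : (1 + S).det = 1 := by
    rw [det_of_isLowerTriangular _ fun k t (hkt : k < t) => by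
      simp [S, one_apply, hkt.ne, show k.val ≠ t.val + 1 by omega]]
    simp [S]
  have hLU : (of fun k i : Fin n => ((i.val + 1).choose k.val : R)) = (1 + S) * U := by
    ext k i
    rw [add_mul, one_mul, Matrix.add_apply, mul_apply]
    rcases k with ⟨_ | k, hk⟩
    · simp [U, S]
    · rw [Finset.sum_eq_single ⟨k, by omega⟩]
      · simp [U, S, choose_succ_succ', add_comm]
      · intro t _ ht
        simp [S, show k ≠ t.val from fun h => ht (Fin.ext h.symm)]
      · simp
  rw [hLU, det_mul, hL, hU, one_mul]

theorem isUnit_det_of_choose_succ_sub (c : ℕ) :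
    IsUnit (of fun j i : Fin (c + 1) => ((i.val + 1).choose (c - j.val) : R)).det := by
  have hrev : (of fun j i : Fin (c + 1) => ((i.val + 1).choose (c - j.val) : R)) =
      (of fun k i : Fin (c + 1) => ((i.val + 1).choose k.val : R)).submatrix Fin.revPerm id := by
    ext j i
    simp
  rw [hrev, det_permute, det_of_choose_succ_eq_one, mul_one]
  exact (Equiv.Perm.sign _).isUnit.map (Int.castRingHom R)

theorem isUnit_det_choose_of_isUnit_factorial {N c : ℕ} (hc : c ≤ N)
    (hfact : ∀ k ≤ N + 1, IsUnit (k ! : R)) :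
    IsUnit (of fun j i : Fin (c + 1) => ((N - c + 1 + i.val).choose (N - j.val) : R)).det := by
  set M := of fun j i : Fin (c + 1) => ((N - c + 1 + i.val).choose (N - j.val) : R)
  have hscale :
      (∏ j : Fin (c + 1), ((N - j.val)! : R)) * ((∏ i : Fin (c + 1), ((i.val + 1)! : R)) * M.det) =
        (∏ j : Fin (c + 1), ((c - j.val)! : R)) * ((∏ i : Fin (c + 1), ((N - c + 1 + i.val)! : R)) *
          (of fun j i : Fin (c + 1) => ((i.val + 1).choose (c - j.val) : R)).det) := by
    rw [← det_mul_row, ← det_mul_column, ← det_mul_row, ← det_mul_column]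
    congr 1
    ext j i
    simp only [M, of_apply, ← Nat.cast_mul]
    rw [factorial_mul_factorial_mul_choose_eq i.val j.is_le hc]
  have hunit : ∀ f : Fin (c + 1) → ℕ, (∀ i, f i ≤ N + 1) → IsUnit (∏ i, ((f i)! : R)) :=
    fun f hf => IsUnit.prod_univ_iff.2 fun i => hfact _ (hf i)
  have hrhs := (hunit (fun j => c - j.val) fun j => by omega).mul
    ((hunit (fun i => N - c + 1 + i.val) fun i => by omega).mul (isUnit_det_of_choose_succ_sub c))
  rw [← hscale] at hrhs
  exact isUnit_of_mul_isUnit_right (isUnit_of_mul_isUnit_right hrhs)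

end

/-- **Lemma 3.7.** Let `p` be a prime and `b, c, m` nonnegative integers with `m + c ≤ b`
(i.e. `m ≤ b − c`) and `b − m ≤ p − 2`. The `(c+1)×(c+1)` matrix over `F_p` with `(j,i)`
entry `C(b−m−c+1+i, b−m−j) mod p` (for `0 ≤ j, i ≤ c`) is invertible. -/
theorem stmt_15 (p : ℕ) (hp : p.Prime) (b c m : ℕ)
    (h1 : m + c ≤ b) (h2 : b - m ≤ p - 2) :
    IsUnit (Matrix.det (Matrix.of fun j i : Fin (c + 1) =>
      (((b - m - c + 1 + i.val).choose (b - m - j.val) : ℕ) : ZMod p))) := by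
  have : Fact p.Prime := ⟨hp⟩
  refine isUnit_det_choose_of_isUnit_factorial (by omega) fun k hk => ?_
  rw [isUnit_iff_ne_zero, Ne, ZMod.natCast_eq_zero_iff, hp.dvd_factorial]
  have := hp.two_le
  omega
end

section
/- Let p be a prime and let c, m be positive integers with c ≤ m. Then the c×c matrix B over the field F_p with rows indexed by 1 ≤ j ≤ c and columns indexed by 0 ≤ i ≤ c−1, whose (j,i) entry is the reduction modulo p of C(m−c+j, i), is invertible. -/
/-!
Vandermonde's identity `C(n + j, i) = ∑ₖ C(j, k) C(n, i - k)` factors the matrix as a lower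
unitriangular Pascal matrix times an upper unitriangular Toeplitz matrix of the `C(n, ·)`, so its
determinant is `1` over every commutative ring.
-/

open Matrix

namespace Matrix

variable {R : Type*} [CommRing R] {c : ℕ}

theorem det_of_choose_eq_one : det (of fun j k : Fin c => (j.val.choose k.val : R)) = 1 := by
  rw [det_of_isLowerTriangular]
  · simp
  · intro j k hjk
    simp [Nat.choose_eq_zero_of_lt (show j.val < k.val from hjk)]

theorem det_of_choose_sub_eq_one (n : ℕ) :
    det (of fun k i : Fin c => if k ≤ i then (n.choose (i.val - k.val) : R) else 0) = 1 := by
  rw [det_of_isUpperTriangular]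
  · simp
  · intro k i hik
    simp [not_le.2 (show i < k from hik)]

theorem of_add_choose_eq_mul (n : ℕ) :
    of (fun j i : Fin c => ((n + j.val).choose i.val : R)) =
      of (fun j k : Fin c => (j.val.choose k.val : R)) *
        of (fun k i : Fin c => if k ≤ i then (n.choose (i.val - k.val) : R) else 0) := by
  ext j i
  simp only [mul_apply, of_apply, mul_ite, mul_zero, Fin.le_iff_val_le_val]
  rw [add_comm, Nat.add_choose_eq, Finset.Nat.sum_antidiagonal_eq_sum_range_succ_mk]
  push_cast
  rw [Fin.sum_univ_eq_sum_range (fun k => if k ≤ i.val then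
    (j.val.choose k : R) * (n.choose (i.val - k) : R) else 0)]
  refine (Finset.sum_congr rfl fun k hk => ?_).trans
    (Finset.sum_subset (Finset.range_subset_range.2 i.isLt) fun k _ hk => ?_)
  · rw [if_pos (Nat.lt_succ_iff.1 (Finset.mem_range.1 hk))]
  · rw [if_neg (by simpa [Nat.lt_succ_iff] using hk)]

theorem det_of_add_choose_eq_one (n : ℕ) :
    det (of fun j i : Fin c => ((n + j.val).choose i.val : R)) = 1 := by
  rw [of_add_choose_eq_mul, det_mul, det_of_choose_eq_one, det_of_choose_sub_eq_one, one_mul]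

end Matrix

theorem stmt_16_general (p : ℕ) (c m : ℕ) :
    IsUnit (Matrix.det (Matrix.of fun j i : Fin c =>
      (((m - c + (j.val + 1)).choose i.val : ℕ) : ZMod p))) := by
  have h := det_of_add_choose_eq_one (R := ZMod p) (c := c) (m - c + 1)
  simp only [add_assoc, add_comm 1] at h
  rw [h]
  exact isUnit_one

/-- **Lemma 3.8.** Let `p` be a prime and `c, m` positive integers with `c ≤ m`. The `c×c`
matrix over `F_p` with rows indexed by `1 ≤ j ≤ c`, columns by `0 ≤ i ≤ c−1`, and `(j,i)`
entry `C(m−c+j, i) mod p`, is invertible. -/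
theorem stmt_16 (p : ℕ) (hp : p.Prime) (c m : ℕ) (hc : 1 ≤ c) (hm : 1 ≤ m) (hcm : c ≤ m) :
    IsUnit (Matrix.det (Matrix.of fun j i : Fin c =>
      (((m - c + (j.val + 1)).choose i.val : ℕ) : ZMod p))) :=
  stmt_16_general p c m
end
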